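/- arXiv:1404.2006 — 4 statements merged into one kernel-verified Lean document; each statement's English description precedes it below -/
import Mathlib

section
/- The information metric of a transfer function is independent of Blaschke factors: if h(z;ξ) = f(z;ξ)·b(z) where b is a finite Blaschke product with zeros independent of ξ, then the metric g_{μν} computed from h equals that computed from f. -/
open MeasureTheory

/-- The Fisher information metric of a linear system, computed from the spectral density
`S w ξ` on the unit circle (`z = e^{iw}`). -/
noncomputable def infoMetric (n : ℕ) (S : ℝ → (Fin n → ℝ) → ℝ) (μ ν : Fin n)
    (ξ : Fin n → ℝ) : ℝ :=
  (1 / (2 * Real.pi)) *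
    ∫ w in (-Real.pi)..Real.pi,
      deriv (fun t => Real.log (S w (Function.update ξ μ t))) (ξ μ) *
        deriv (fun t => Real.log (S w (Function.update ξ ν t))) (ξ ν)

open ComplexConjugate

noncomputable def blaschkeFactor (a z : ℂ) : ℂ :=
  if a = 0 then z else ((‖a‖ : ℂ) / a) * ((a - z) / (1 - conj a * z))

/-- Up to sign, the non-trivial Blaschke factor is the reciprocal of Mathlib's
`Complex.canonicalFactor 1 a`, which has modulus one on the unit circle. -/
theorem norm_blaschkeFactor_eq_one {a z : ℂ} (ha : ‖a‖ < 1) (hz : ‖z‖ = 1) :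
    ‖blaschkeFactor a z‖ = 1 := by
  unfold blaschkeFactor
  split_ifs with ha0
  · exact hz
  have hcanonical : ‖Complex.canonicalFactor 1 a z‖ = 1 :=
    Complex.norm_canonicalFactor_eval_circle_eq_one (by simpa using ha) (by simpa using hz)
  have hfactor : (a - z) / (1 - conj a * z) = -(Complex.canonicalFactor 1 a z)⁻¹ := by
    rw [Complex.canonicalFactor_apply, inv_div, ← neg_div]
    simp
  rw [hfactor, norm_mul, norm_div, norm_neg, norm_inv, hcanonical, Complex.norm_real, norm_norm,
    div_self (norm_ne_zero_iff.mpr ha0)]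
  norm_num

theorem norm_prod_blaschkeFactor_eq_one {ι : Type*} (t : Finset ι) {a : ι → ℂ}
    (ha : ∀ s ∈ t, ‖a s‖ < 1) {z : ℂ} (hz : ‖z‖ = 1) :
    ‖∏ s ∈ t, blaschkeFactor (a s) z‖ = 1 := by
  rw [norm_prod]
  exact Finset.prod_eq_one fun s hs => norm_blaschkeFactor_eq_one (ha s hs) hz

/-- The information metric is independent of Blaschke factors: if
`h(z;ξ) = f(z;ξ)·b(z)` with `b` a finite Blaschke product whose zeros do not depend
on `ξ`, the metrics computed from `h` and from `f` coincide. -/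
theorem stmt6 (n m : ℕ) (f h : ℂ → (Fin n → ℝ) → ℂ) (a : Fin m → ℂ)
    (ha : ∀ s, ‖a s‖ < 1) (b : ℂ → ℂ)
    (hb : ∀ z, b z = ∏ s : Fin m,
      if a s = 0 then z
      else ((‖a s‖ : ℂ) / a s) * ((a s - z) / (1 - starRingEnd ℂ (a s) * z)))
    (hfac : ∀ z ξ, h z ξ = f z ξ * b z) (μ ν : Fin n) (ξ : Fin n → ℝ) :
    infoMetric n (fun w ξ => ‖h (Complex.exp (Complex.I * w)) ξ‖ ^ 2) μ ν ξ
      = infoMetric n (fun w ξ => ‖f (Complex.exp (Complex.I * w)) ξ‖ ^ 2) μ ν ξ := by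
  have hb_circle (w : ℝ) : ‖b (Complex.exp (Complex.I * w))‖ = 1 := by
    have hz : ‖Complex.exp (Complex.I * w)‖ = 1 := by
      rw [mul_comm]
      exact Complex.norm_exp_ofReal_mul_I w
    rw [hb]
    exact norm_prod_blaschkeFactor_eq_one _ (fun s _ => ha s) hz
  have hdensity : (fun (w : ℝ) ξ => ‖h (Complex.exp (Complex.I * w)) ξ‖ ^ 2)
      = fun (w : ℝ) ξ => ‖f (Complex.exp (Complex.I * w)) ξ‖ ^ 2 := by
    funext w ξ'
    rw [hfac, norm_mul, hb_circle, mul_one]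
  rw [hdensity]
end

section
/- The 0-divergence between a signal filter h and the all-pass unit filter decomposes as D^{(0)}(1‖h) = K + F(ξ) + conj(F(ξ)), where K is the Kähler potential and F(ξ) = (1/2)·η₀(ξ)² is holomorphic in ξ. -/
open MeasureTheory

/-- The logarithmic transfer function `log h(e^{iw};ξ) = Σ_{r≥0} η_r(ξ) e^{-irw}`. -/
noncomputable def Lser {n : ℕ} (η : ℕ → (Fin n → ℂ) → ℂ) (w : ℝ) (ξ : Fin n → ℂ) : ℂ :=
  ∑' r : ℕ, η r ξ * Complex.exp (-(Complex.I * (w : ℂ) * (r : ℕ)))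

/-! Write `L(w) = Σ_r η_r e^{-irw}` and expand `(L + conj L)² / 2 = L² / 2 + L conj L + conj (L²) / 2`.
Each product is an absolutely convergent double trigonometric series, which may be integrated term
by term, and over a full period only the terms of total frequency zero survive: for `L²` this is
the single term `η₀²`, for `L conj L` the diagonal `Σ_r |η_r|²` (Parseval). -/

open Complex ComplexConjugate

noncomputable def expMode (k : ℤ) (w : ℝ) : ℂ := exp (k * w * I)

lemma norm_expMode (k : ℤ) (w : ℝ) : ‖expMode k w‖ = 1 := by
  simpa [expMode] using norm_exp_ofReal_mul_I (k * w)

lemma expMode_add (j k : ℤ) (w : ℝ) : expMode (j + k) w = expMode j w * expMode k w := by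
  rw [expMode, expMode, expMode, ← exp_add]
  congr 1
  push_cast
  ring

lemma conj_expMode (k : ℤ) (w : ℝ) : conj (expMode k w) = expMode (-k) w := by
  rw [expMode, expMode, ← exp_conj]
  simp

@[fun_prop]
lemma continuous_expMode (k : ℤ) : Continuous (expMode k) := by
  unfold expMode
  fun_prop

lemma integral_expMode (k : ℤ) :
    ∫ w in (0 : ℝ)..2 * Real.pi, expMode k w = if k = 0 then 2 * (Real.pi : ℂ) else 0 := by
  split_ifs with hk
  · simp [expMode, hk]
  · have hkI : (k * I : ℂ) ≠ 0 := mul_ne_zero (by exact_mod_cast hk) I_ne_zero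
    simp_rw [expMode, mul_right_comm _ _ I]
    rw [integral_exp_mul_complex hkI]
    have hperiod : exp (k * I * (2 * Real.pi)) = 1 := by
      rw [← exp_int_mul_two_pi_mul_I k]
      ring_nf
    simp [hperiod]

section TrigonometricSeries

variable {ι κ : Type*} {a : ι → ℂ} {b : κ → ℂ}

lemma summable_norm_mul_expMode (ha : Summable (‖a ·‖)) (m : ι → ℤ) (w : ℝ) :
    Summable fun i => ‖a i * expMode (m i) w‖ := by
  simpa [norm_expMode] using ha

lemma continuous_tsum_mul_expMode (ha : Summable (‖a ·‖)) (m : ι → ℤ) :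
    Continuous fun w => ∑' i, a i * expMode (m i) w :=
  continuous_tsum (fun i => by fun_prop) ha fun i w => by rw [norm_mul, norm_expMode, mul_one]

lemma integral_tsum_mul_expMode [Countable ι] (ha : Summable (‖a ·‖)) (m : ι → ℤ) :
    ∫ w in (0 : ℝ)..2 * Real.pi, ∑' i, a i * expMode (m i) w
      = 2 * Real.pi * ∑' i, if m i = 0 then a i else 0 := by
  have h2π : (0 : ℝ) ≤ 2 * Real.pi := by positivity
  rw [intervalIntegral.integral_of_le h2π, ← integral_tsum_of_summable_integral_norm,
    ← tsum_mul_left]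
  · refine tsum_congr fun i => ?_
    rw [integral_const_mul, ← intervalIntegral.integral_of_le h2π, integral_expMode]
    split_ifs <;> ring
  · exact fun i => (by fun_prop : Continuous _).integrableOn_Ioc
  · simpa [norm_expMode, h2π] using ha.mul_left (2 * Real.pi)

lemma tsum_mul_expMode_mul_tsum (ha : Summable (‖a ·‖)) (hb : Summable (‖b ·‖))
    (m : ι → ℤ) (k : κ → ℤ) (w : ℝ) :
    (∑' i, a i * expMode (m i) w) * (∑' j, b j * expMode (k j) w)
      = ∑' p : ι × κ, a p.1 * b p.2 * expMode (m p.1 + k p.2) w := by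
  rw [tsum_mul_tsum_of_summable_norm (summable_norm_mul_expMode ha m w)
    (summable_norm_mul_expMode hb k w)]
  exact tsum_congr fun p => by rw [expMode_add]; ring

lemma integral_tsum_mul_expMode_mul_tsum [Countable ι] [Countable κ]
    (ha : Summable (‖a ·‖)) (hb : Summable (‖b ·‖)) (m : ι → ℤ) (k : κ → ℤ) :
    ∫ w in (0 : ℝ)..2 * Real.pi, (∑' i, a i * expMode (m i) w) * (∑' j, b j * expMode (k j) w)
      = 2 * Real.pi * ∑' p : ι × κ, if m p.1 + k p.2 = 0 then a p.1 * b p.2 else 0 := by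
  simp_rw [tsum_mul_expMode_mul_tsum ha hb]
  exact integral_tsum_mul_expMode (ha.mul_norm hb) _

lemma conj_tsum_mul_expMode (m : ι → ℤ) (w : ℝ) :
    conj (∑' i, a i * expMode (m i) w) = ∑' i, conj (a i) * expMode (-m i) w := by
  simp [conj_tsum, conj_expMode]

end TrigonometricSeries

section OneSidedSeries

variable {c : ℕ → ℂ}

lemma integral_sq_tsum_mul_expMode_neg (hc : Summable (‖c ·‖)) :
    ∫ w in (0 : ℝ)..2 * Real.pi, (∑' r : ℕ, c r * expMode (-r) w) ^ 2
      = 2 * Real.pi * c 0 ^ 2 := by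
  simp_rw [sq]
  rw [integral_tsum_mul_expMode_mul_tsum hc hc, tsum_eq_single (0, 0)]
  · simp
  · rintro ⟨i, j⟩ hij
    rw [if_neg]
    contrapose! hij
    simp only [Prod.mk.injEq]
    omega

lemma integral_tsum_mul_expMode_neg_mul_conj (hc : Summable (‖c ·‖)) :
    ∫ w in (0 : ℝ)..2 * Real.pi,
        (∑' r : ℕ, c r * expMode (-r) w) * conj (∑' r : ℕ, c r * expMode (-r) w)
      = 2 * Real.pi * ∑' r, c r * conj (c r) := by
  have hc' : Summable fun r => ‖conj (c r)‖ := by simpa using hc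
  simp_rw [conj_tsum_mul_expMode, neg_neg]
  rw [integral_tsum_mul_expMode_mul_tsum hc hc', Summable.tsum_prod]
  · simp_rw [neg_add_eq_zero, Nat.cast_inj]
    congr 1
    exact tsum_congr fun i => tsum_ite_eq' i _
  · refine (hc.mul_norm hc').of_norm_bounded fun p => ?_
    split_ifs <;> simp [mul_nonneg]

end OneSidedSeries

lemma integral_half_sq_add_conj {f : ℝ → ℂ} (hf : Continuous f) (a b : ℝ) :
    ∫ w in a..b, (1 / 2 : ℂ) * (f w + conj (f w)) ^ 2
      = (1 / 2 : ℂ) * (∫ w in a..b, f w ^ 2) + (∫ w in a..b, f w * conj (f w))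
        + (1 / 2 : ℂ) * conj (∫ w in a..b, f w ^ 2) := by
  have hexpand : ∀ w, (1 / 2 : ℂ) * (f w + conj (f w)) ^ 2
      = (1 / 2 : ℂ) * f w ^ 2 + f w * conj (f w) + (1 / 2 : ℂ) * conj (f w ^ 2) := fun w => by
    rw [map_pow]; ring
  simp_rw [hexpand]
  rw [intervalIntegral.integral_add, intervalIntegral.integral_add,
    intervalIntegral.integral_const_mul, intervalIntegral.integral_const_mul,
    intervalIntegral.intervalIntegral_conj]
  all_goals
    apply Continuous.intervalIntegrable
    fun_prop

lemma Lser_eq_tsum_mul_expMode {n : ℕ} (η : ℕ → (Fin n → ℂ) → ℂ) (w : ℝ) (ξ : Fin n → ℂ) :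
    Lser η w ξ = ∑' r : ℕ, η r ξ * expMode (-r) w :=
  tsum_congr fun r => by rw [expMode]; push_cast; ring_nf

/-- The 0-divergence between the all-pass unit filter and `h` decomposes as
`D^{(0)}(1‖h) = K + F(ξ) + conj(F(ξ))` with `K = Σ_r |η_r|²` the Kähler potential and
`F = (1/2)η₀²` holomorphic. -/
theorem stmt11 {n : ℕ} (η : ℕ → (Fin n → ℂ) → ℂ) (ξ : Fin n → ℂ)
    (habs : Summable fun r : ℕ => ‖η r ξ‖) :
    (1 / (2 * (Real.pi : ℂ))) *
        ∫ w in (0 : ℝ)..(2 * Real.pi),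
          (1 / 2 : ℂ) * (Lser η w ξ + starRingEnd ℂ (Lser η w ξ)) ^ 2
      = (∑' r : ℕ, η r ξ * starRingEnd ℂ (η r ξ))
        + (1 / 2 : ℂ) * (η 0 ξ) ^ 2 + starRingEnd ℂ ((1 / 2 : ℂ) * (η 0 ξ) ^ 2) := by
  have hcont : Continuous fun w => Lser η w ξ := by
    simpa only [Lser_eq_tsum_mul_expMode] using continuous_tsum_mul_expMode habs _
  rw [integral_half_sq_add_conj hcont]
  simp_rw [Lser_eq_tsum_mul_expMode]
  rw [integral_sq_tsum_mul_expMode_neg habs, integral_tsum_mul_expMode_neg_mul_conj habs]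
  simp only [map_mul, map_pow, map_div₀, map_one, map_ofNat, conj_ofReal]
  field_simp
  ring
end

section
/- For the complexified ARMA(p,q) model with logarithmic transfer function log h = log(σ²/2π) + Σ_{i=1}^{n} c_i log(1 − ξ^i z^{−1}), n = p+q, c_i ∈ {−1,+1}, |ξ^i| < 1, the Kähler potential on the constant-σ submanifold is K = Σ_{r=1}^{∞} (1/r²) |Σ_{i=1}^{n} c_i (ξ^i)^r|². -/
/-!
Expanding `log (1 - z) = -∑_{m ≥ 1} z^m / m` shows that
`w ↦ ∑ᵢ cᵢ log (1 - ξᵢ e^{-iw})` is the Fourier series `∑_{m ≥ 1} η_m e^{-imw}` with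
`η_m = -(1/m) ∑ᵢ cᵢ ξᵢ^m`. Since `|ξᵢ| < 1` the coefficients are absolutely summable, so the series
converges uniformly to a continuous function on the circle whose Fourier coefficients are the `η_m`,
and Parseval's identity turns the mean of its squared modulus into `∑_{m ≥ 1} |η_m|²`.
-/

open MeasureTheory Complex

namespace AddCircle

variable {T : ℝ} [Fact (0 < T)] {ι : Type*} {k : ι → ℤ} {a : ι → ℂ}

theorem summable_smul_fourier (ha : Summable fun i => ‖a i‖) :
    Summable fun i => a i • fourier (T := T) (k i) :=
  Summable.of_norm <| by simpa only [norm_smul, fourier_norm, mul_one] using ha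

theorem fourierCoeff_tsum_smul_fourier [Countable ι] (ha : Summable fun i => ‖a i‖) (n : ℤ) :
    fourierCoeff ⇑(∑' i, a i • fourier (T := T) (k i)) n =
      ∑' i, (Pi.single (k i) (a i) : ℤ → ℂ) n := by
  have hterm (i : ι) :
      fourierCoeff ⇑(a i • fourier (T := T) (k i)) n = (Pi.single (k i) (a i) : ℤ → ℂ) n := by
    rw [ContinuousMap.coe_smul, fourierCoeff.const_smul, fourierCoeff_fourier]
    simp [Pi.single_apply]
  simp_rw [← hterm, fourierCoeff]
  rw [integral_tsum_of_summable_integral_norm]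
  · congr 1 with t
    rw [← ContinuousMap.tsum_apply (summable_smul_fourier ha), ← tsum_const_smul'']
  · exact fun i => Continuous.integrable_of_hasCompactSupport (by fun_prop)
      (HasCompactSupport.of_compactSpace _)
  · simpa [norm_smul, Circle.norm_coe] using ha

theorem integral_norm_sq_tsum_smul_fourier [Countable ι] (hk : Function.Injective k)
    (ha : Summable fun i => ‖a i‖) :
    ∫ t, ‖(∑' i, a i • fourier (T := T) (k i)) t‖ ^ 2 ∂haarAddCircle = ∑' i, ‖a i‖ ^ 2 := by
  set F := ∑' i, a i • fourier (T := T) (k i)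
  have hcoeff (j : ι) : fourierCoeff F (k j) = a j := by
    rw [fourierCoeff_tsum_smul_fourier ha, tsum_eq_single j fun i hi => by simp [hk.ne hi]]
    simp
  have hsupp : (Function.support fun n => ‖fourierCoeff F n‖ ^ 2) ⊆ Set.range k := by
    intro n hn
    by_contra hnk
    refine hn ?_
    simp only [F, fourierCoeff_tsum_smul_fourier ha]
    simp_all
  have parseval := tsum_sq_fourierCoeff (ContinuousMap.toLp 2 haarAddCircle ℂ F)
  simp_rw [fourierCoeff_toLp, ← hk.tsum_eq hsupp, hcoeff] at parseval
  rw [parseval]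
  exact integral_congr_ae ((ContinuousMap.coeFn_toLp (p := 2) (𝕜 := ℂ) _ _).mono fun t ht => by
    dsimp only; rw [ht])

theorem inv_mul_intervalIntegral_norm_sq_tsum_smul_fourier [Countable ι]
    (hk : Function.Injective k) (ha : Summable fun i => ‖a i‖) :
    T⁻¹ * ∫ x in (0 : ℝ)..T, ‖(∑' i, a i • fourier (T := T) (k i)) x‖ ^ 2 =
      ∑' i, ‖a i‖ ^ 2 := by
  rw [← integral_norm_sq_tsum_smul_fourier (T := T) hk ha, integral_haarAddCircle,
    ← AddCircle.intervalIntegral_preimage T 0, zero_add, smul_eq_mul]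

end AddCircle

/-- The coefficient `η_m` of `z^m` in `∑ᵢ cᵢ log (1 - ξᵢ z)`; at `m = 0` the division by zero
gives `0`, the constant term of that series. -/
noncomputable def logCoeff {ι : Type*} [Fintype ι] (c ξ : ι → ℂ) (m : ℕ) : ℂ :=
  -(∑ i, c i * ξ i ^ m) / m

section logCoeff

variable {ι : Type*} [Fintype ι] (c ξ : ι → ℂ)

@[simp]
theorem logCoeff_zero : logCoeff c ξ 0 = 0 := by
  simp [logCoeff]

theorem hasSum_logCoeff_mul_pow {u : ℂ} (h : ∀ i, ‖ξ i * u‖ < 1) :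
    HasSum (fun m => logCoeff c ξ m * u ^ m) (∑ i, c i * log (1 - ξ i * u)) := by
  have hterm (i : ι) :
      HasSum (fun m : ℕ => c i * -((ξ i * u) ^ m / m)) (c i * log (1 - ξ i * u)) := by
    simpa using (hasSum_taylorSeries_neg_log (h i)).neg.mul_left (c i)
  convert hasSum_sum fun i _ => hterm i using 1
  ext m
  rw [logCoeff, neg_div, neg_mul, Finset.sum_div, Finset.sum_mul, ← Finset.sum_neg_distrib]
  exact Finset.sum_congr rfl fun i _ => by ring

theorem summable_norm_logCoeff (hξ : ∀ i, ‖ξ i‖ < 1) : Summable fun m => ‖logCoeff c ξ m‖ := by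
  refine .of_nonneg_of_le (fun _ => norm_nonneg _) (fun m => ?_) (summable_sum (s := .univ)
    fun i _ => (summable_geometric_of_lt_one (norm_nonneg _) (hξ i)).mul_left ‖c i‖)
  calc ‖logCoeff c ξ m‖ ≤ ‖∑ i, c i * ξ i ^ m‖ := by
        rcases m with _ | m
        · simp
        rw [logCoeff, norm_div, norm_neg, Complex.norm_natCast]
        exact div_le_self (norm_nonneg _) (by simp)
    _ ≤ ∑ i, ‖c i‖ * ‖ξ i‖ ^ m := by
        simpa only [norm_mul, norm_pow] using norm_sum_le .univ fun i => c i * ξ i ^ m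

theorem tsum_logCoeff_smul_fourier_coe (hξ : ∀ i, ‖ξ i‖ < 1) (w : ℝ) :
    (∑' m : ℕ, logCoeff c ξ m • fourier (T := 2 * Real.pi) (-(m : ℤ))) w =
      ∑ i, c i * log (1 - ξ i * exp (-(I * w))) := by
  have := Fact.mk Real.two_pi_pos
  have hE : ‖exp (-(I * w))‖ = 1 := by
    rw [show -(I * w) = ((-w : ℝ) : ℂ) * I by push_cast; ring, norm_exp_ofReal_mul_I]
  rw [← ContinuousMap.tsum_apply (AddCircle.summable_smul_fourier (summable_norm_logCoeff c ξ hξ))]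
  refine HasSum.tsum_eq ?_
  convert hasSum_logCoeff_mul_pow c ξ (u := exp (-(I * w))) (fun i => by
    rw [norm_mul, hE, mul_one]; exact hξ i) using 2 with m
  rw [ContinuousMap.smul_apply, fourier_coe_apply, smul_eq_mul, ← exp_nat_mul]
  congr 2
  field_simp
  push_cast
  ring

end logCoeff

theorem stmt12_general {n : ℕ} (c : Fin n → ℤ)
    (ξ : Fin n → ℂ) (hξ : ∀ i, ‖ξ i‖ < 1) :
    (1 / (2 * Real.pi)) *
        ∫ w in (0 : ℝ)..(2 * Real.pi),
          ‖∑ i, (c i : ℂ) * Complex.log (1 - ξ i * Complex.exp (-(Complex.I * (w : ℂ))))‖ ^ 2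
      = ∑' r : ℕ, (1 / ((r + 1 : ℕ) : ℝ) ^ 2) * ‖∑ i, (c i : ℂ) * (ξ i) ^ (r + 1)‖ ^ 2 := by
  have := Fact.mk Real.two_pi_pos
  simp_rw [← tsum_logCoeff_smul_fourier_coe _ ξ hξ]
  rw [one_div, AddCircle.inv_mul_intervalIntegral_norm_sq_tsum_smul_fourier
      (fun _ _ h => by simpa using h) (summable_norm_logCoeff _ ξ hξ),
    ← tsum_pnat_eq_tsum_of_eq_zero (by simp),
    tsum_pnat_eq_tsum_succ (f := fun m => ‖logCoeff _ ξ m‖ ^ 2)]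
  refine tsum_congr fun r => ?_
  rw [logCoeff, norm_div, norm_neg, Complex.norm_natCast, div_pow, one_div_mul_eq_div]

/-- For the complexified ARMA(p,q) model with
`log h = log(σ²/2π) + Σ_i c_i log(1 − ξ^i z^{−1})` (`c_i = ±1`, `|ξ^i| < 1`), the Kähler
potential on the constant-σ submanifold — the squared Hardy norm of the non-constant part
of the logarithmic transfer function — equals `Σ_{r≥1} (1/r²)|Σ_i c_i (ξ^i)^r|²`. -/
theorem stmt12 {n : ℕ} (c : Fin n → ℤ) (hc : ∀ i, c i = 1 ∨ c i = -1)
    (ξ : Fin n → ℂ) (hξ : ∀ i, ‖ξ i‖ < 1) :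
    (1 / (2 * Real.pi)) *
        ∫ w in (0 : ℝ)..(2 * Real.pi),
          ‖∑ i, (c i : ℂ) * Complex.log (1 - ξ i * Complex.exp (-(Complex.I * (w : ℂ))))‖ ^ 2
      = ∑' r : ℕ, (1 / ((r + 1 : ℕ) : ℝ) ^ 2) * ‖∑ i, (c i : ℂ) * (ξ i) ^ (r + 1)‖ ^ 2 :=
  stmt12_general c ξ hξ
end

section
/- For the ARMA(p,q) model, the nontrivial 0-connection components are Γ^{(0)}_{ij,¯k} = c_j c_k · δ_{ij} · conj(ξ^k) / (1 − ξ^j conj(ξ^k))². -/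
/-- Holomorphic partial derivative `∂_i F` in the `i`-th complex coordinate. -/
noncomputable def pd {n : ℕ} (F : (Fin n → ℂ) → ℂ) (i : Fin n) (ξ : Fin n → ℂ) : ℂ :=
  deriv (fun t => F (Function.update ξ i t)) (ξ i)

/-- The coefficients `η_r(ξ) = −(1/r) Σ_i c_i (ξ^i)^r` of the logarithmic ARMA transfer
function. -/
noncomputable def etaARMA {n : ℕ} (c : Fin n → ℤ) (r : ℕ) (ξ : Fin n → ℂ) : ℂ :=
  -(1 / (r : ℂ)) * ∑ m, (c m : ℂ) * (ξ m) ^ r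

/-!
Since `η_{r+1}` is a sum of one-variable monomials, `∂_k η_{r+1} = -c_k (ξ^k)^r` and
`∂_j ∂_i η_{r+1}` vanishes off the diagonal. On the diagonal the series is
`c_i c_k conj(ξ^k) Σ_r r z^{r-1}` with `z = ξ^i conj(ξ^k)`, a differentiated geometric series,
summing to `c_i c_k conj(ξ^k) / (1 - z)²`.
-/

open Finset Function ComplexConjugate

theorem hasSum_natCast_mul_pow_pred_mul_pow {𝕜 : Type*} [NormedField 𝕜] [CompleteSpace 𝕜]
    {x w : 𝕜} (h : ‖x * w‖ < 1) :
    HasSum (fun r : ℕ => r * x ^ (r - 1) * w ^ r) (w / (1 - x * w) ^ 2) := by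
  -- the `r = 0` term is `0`, whatever the truncated `0 - 1` gives
  have hs := (hasSum_choose_mul_geometric_of_norm_lt_one 1 h).mul_left w
  rw [mul_one_div] at hs
  rw [← hasSum_nat_add_iff' 1, range_one, sum_singleton, Nat.cast_zero, zero_mul, zero_mul,
    sub_zero]
  refine hs.congr_fun fun r => ?_
  rw [Nat.choose_one_right, Nat.add_sub_cancel, mul_pow]
  push_cast
  ring

section PartialDerivatives

variable {n : ℕ}

theorem pd_comp_eval (g : ℂ → ℂ) (i j : Fin n) (ξ : Fin n → ℂ) :
    pd (fun ξ' => g (ξ' i)) j ξ = if i = j then deriv g (ξ i) else 0 := by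
  unfold pd
  split_ifs with h
  · subst h
    simp only [update_self]
  · simp [update_of_ne h]

theorem pd_sum_comp_eval (g : Fin n → ℂ → ℂ) (k : Fin n) (ξ : Fin n → ℂ) :
    pd (fun ξ' => ∑ m, g m (ξ' m)) k ξ = deriv (g k) (ξ k) := by
  have split_off_k : ∀ t, ∑ m, g m (update ξ k t m) = g k t + ∑ m ∈ univ.erase k, g m (ξ m) := by
    intro t
    rw [← add_sum_erase _ _ (mem_univ k), update_self]
    congr 1
    exact sum_congr rfl fun m hm => by rw [update_of_ne (ne_of_mem_erase hm)]
  unfold pd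
  simp_rw [split_off_k]
  exact deriv_add_const _

theorem pd_const_mul (a : ℂ) (F : (Fin n → ℂ) → ℂ) (k : Fin n) (ξ : Fin n → ℂ) :
    pd (fun ξ' => a * F ξ') k ξ = a * pd F k ξ :=
  congrFun (deriv_const_mul_field' a) _

theorem pd_etaARMA_succ (c : Fin n → ℤ) (r : ℕ) (k : Fin n) (ξ : Fin n → ℂ) :
    pd (etaARMA c (r + 1)) k ξ = -(c k) * ξ k ^ r := by
  unfold etaARMA
  rw [pd_const_mul, pd_sum_comp_eval (fun m t => (c m : ℂ) * t ^ (r + 1))]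
  simp only [deriv_const_mul_field', deriv_pow_field, Nat.add_sub_cancel]
  field_simp

theorem pd_pd_etaARMA_succ (c : Fin n → ℤ) (r : ℕ) (i j : Fin n) (ξ : Fin n → ℂ) :
    pd (fun ξ' => pd (etaARMA c (r + 1)) i ξ') j ξ
      = if i = j then -(c i) * (r * ξ i ^ (r - 1)) else 0 := by
  simp_rw [pd_etaARMA_succ]
  rw [pd_comp_eval (fun t => -(c i : ℂ) * t ^ r)]
  simp only [deriv_const_mul_field', deriv_pow_field]

end PartialDerivatives

theorem stmt14_general {n : ℕ} (c : Fin n → ℤ)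
    (ξ : Fin n → ℂ) (hξ : ∀ m, ‖ξ m‖ < 1) (i j k : Fin n) :
    ∑' r : ℕ,
        pd (fun ξ' => pd (etaARMA c (r + 1)) i ξ') j ξ
          * starRingEnd ℂ (pd (etaARMA c (r + 1)) k ξ)
      = (if i = j then 1 else 0) * (c j : ℂ) * (c k : ℂ) * starRingEnd ℂ (ξ k)
          / (1 - ξ j * starRingEnd ℂ (ξ k)) ^ 2 := by
  simp_rw [pd_pd_etaARMA_succ, pd_etaARMA_succ]
  split_ifs with hij
  · subst hij
    have hz : ‖ξ i * conj (ξ k)‖ < 1 := by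
      rw [norm_mul, Complex.norm_conj]
      exact mul_lt_one_of_nonneg_of_lt_one_left (norm_nonneg _) (hξ i) (hξ k).le
    convert ((hasSum_natCast_mul_pow_pred_mul_pow hz).mul_left ((c i : ℂ) * c k)).tsum_eq using 1
    · congr 1
      funext r
      simp only [map_mul, map_neg, map_pow, map_intCast]
      ring
    · ring
  · simp

/-- ARMA(p,q) 0-connection components:
`Γ^{(0)}_{ij,¯k} = Σ_{r≥1} ∂_i∂_j η_r · conj(∂_k η_r)
  = c_j c_k δ_{ij} conj(ξ^k) / (1 − ξ^j conj(ξ^k))²`. -/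
theorem stmt14 {n : ℕ} (c : Fin n → ℤ) (hc : ∀ m, c m = 1 ∨ c m = -1)
    (ξ : Fin n → ℂ) (hξ : ∀ m, ‖ξ m‖ < 1) (i j k : Fin n) :
    ∑' r : ℕ,
        pd (fun ξ' => pd (etaARMA c (r + 1)) i ξ') j ξ
          * starRingEnd ℂ (pd (etaARMA c (r + 1)) k ξ)
      = (if i = j then 1 else 0) * (c j : ℂ) * (c k : ℂ) * starRingEnd ℂ (ξ k)
          / (1 - ξ j * starRingEnd ℂ (ξ k)) ^ 2 :=
  stmt14_general c ξ hξ i j k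
end
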